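/- Let a, b ∈ ℂ have strictly positive real parts and let X be a random variable on ℝ with density φ(x; a, b, conj(a), conj(b)). Then E(X) = −(Re(a)·Im(b) + Re(b)·Im(a)) / Re(a + b). -/

import Mathlib

open MeasureTheory Complex Real

/-- The continuous Hahn weight
`φ(x;a,b,c,d) = Γ(a+b+c+d)·Γ(a+ix)·Γ(b+ix)·Γ(c−ix)·Γ(d−ix)
  / [2π·Γ(a+c)·Γ(b+c)·Γ(a+d)·Γ(b+d)]`. -/
noncomputable def hahn (x : ℝ) (a b c d : ℂ) : ℂ :=
  Complex.Gamma (a + b + c + d) *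
    Complex.Gamma (a + Complex.I * x) * Complex.Gamma (b + Complex.I * x) *
    Complex.Gamma (c - Complex.I * x) * Complex.Gamma (d - Complex.I * x) /
  (2 * Real.pi * Complex.Gamma (a + c) * Complex.Gamma (b + c) *
    Complex.Gamma (a + d) * Complex.Gamma (b + d))

open Set

noncomputable def fe (p q : ℂ) (t : ℝ) : ℂ :=
  Complex.exp (p * t - (p + q) * Real.log (1 + Real.exp t))


namespace HahnAux
lemma phi_deriv {x : ℝ} (hx : x ∈ Ioo (0:ℝ) 1) :
    HasDerivAt (fun y : ℝ => Real.log y - Real.log (1 - y)) (x⁻¹ + (1-x)⁻¹) x := by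
  obtain ⟨h0, h1⟩ := hx
  have h1' : 1 - x ≠ 0 := by linarith [h1]
  have hlog : HasDerivAt Real.log x⁻¹ x := Real.hasDerivAt_log (ne_of_gt h0)
  have h2 : HasDerivAt (fun y : ℝ => Real.log (1 - y)) (-(1-x)⁻¹) x := by
    have : HasDerivAt (fun y : ℝ => 1 - y) (-1) x := by
      simpa using (hasDerivAt_id x).const_sub 1
    exact ((Real.hasDerivAt_log h1').comp x this).congr_deriv (by ring)
  exact (hlog.sub h2).congr_deriv (by ring)

lemma exp_phi {x : ℝ} (hx : x ∈ Ioo (0:ℝ) 1) :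
    Real.exp (Real.log x - Real.log (1 - x)) = x / (1 - x) := by
  obtain ⟨h0, h1⟩ := hx
  rw [Real.exp_sub, Real.exp_log h0, Real.exp_log (by linarith)]

lemma phi_image : (fun y : ℝ => Real.log y - Real.log (1 - y)) '' Ioo (0:ℝ) 1 = univ := by
  apply eq_univ_of_forall
  intro t
  refine ⟨Real.exp t / (1 + Real.exp t), ⟨?_, ?_⟩, ?_⟩
  · positivity
  · rw [div_lt_one (by positivity)]; linarith [Real.exp_pos t]
  · have hpos : (0:ℝ) < 1 + Real.exp t := by positivity
    have h1 : 1 - Real.exp t / (1 + Real.exp t) = (1 + Real.exp t)⁻¹ := by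
      field_simp
      ring
    simp only []
    show Real.log (Real.exp t / (1 + Real.exp t)) - Real.log (1 - Real.exp t / (1 + Real.exp t)) = t
    rw [h1, Real.log_div (Real.exp_ne_zero t) (ne_of_gt hpos), Real.log_inv,
      Real.log_exp]
    ring

lemma phi_inj : InjOn (fun y : ℝ => Real.log y - Real.log (1 - y)) (Ioo (0:ℝ) 1) := by
  intro x hx y hy h
  have := congrArg Real.exp h
  rw [exp_phi hx, exp_phi hy] at this
  have hx1 : (1:ℝ) - x ≠ 0 := by cases hx with | intro a b => intro hc; linarith
  have hy1 : (1:ℝ) - y ≠ 0 := by cases hy with | intro a b => intro hc; linarith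
  field_simp at this
  linarith

lemma cpow_pos_real {y : ℝ} (hy : 0 < y) (w : ℂ) :
    (y : ℂ) ^ w = Complex.exp (w * (Real.log y : ℂ)) := by
  rw [Complex.cpow_def_of_ne_zero (by exact_mod_cast ne_of_gt hy),
    ← Complex.ofReal_log hy.le, mul_comm]

lemma smul_fe_phi (p q : ℂ) {x : ℝ} (hx : x ∈ Ioo (0:ℝ) 1) :
    |x⁻¹ + (1-x)⁻¹| • fe p q (Real.log x - Real.log (1 - x))
      = (x:ℂ)^(p-1) * (1-(x:ℂ))^(q-1) := by
  obtain ⟨hx0, hx1⟩ := hx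
  have h1x : (0:ℝ) < 1 - x := by linarith
  have hexp : Real.exp (Real.log x - Real.log (1 - x)) = x / (1 - x) := by
    rw [Real.exp_sub, Real.exp_log hx0, Real.exp_log h1x]
  have habs : |x⁻¹ + (1-x)⁻¹| = Real.exp (-(Real.log x) - Real.log (1-x)) := by
    rw [abs_of_pos (by positivity), Real.exp_sub, Real.exp_neg, Real.exp_log hx0,
      Real.exp_log h1x]
    field_simp
    ring
  have hbase : 1 + Real.exp (Real.log x - Real.log (1 - x)) = (1-x)⁻¹ := by
    rw [hexp]; field_simp; ring
  rw [fe, hexp] at *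
  rw [habs, hbase, Real.log_inv]
  rw [cpow_pos_real hx0, (by push_cast; ring : 1 - (x:ℂ) = ((1-x:ℝ):ℂ)),
    cpow_pos_real h1x]
  rw [Complex.real_smul, Complex.ofReal_exp, ← Complex.exp_add, ← Complex.exp_add]
  congr 1
  push_cast
  ring

lemma fe_betaIntegrand :
    ∀ (p q : ℂ), (fun x : ℝ => |x⁻¹ + (1-x)⁻¹| • fe p q (Real.log x - Real.log (1 - x)))
      =ᵐ[volume.restrict (Ioo (0:ℝ) 1)] fun x : ℝ => (x:ℂ)^(p-1) * (1-(x:ℂ))^(q-1) := by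
  intro p q
  filter_upwards [ae_restrict_mem measurableSet_Ioo] with x hx
  exact smul_fe_phi p q hx


theorem fe_integrable {p q : ℂ} (hp : 0 < p.re) (hq : 0 < q.re) :
    Integrable (fe p q) := by
  have hderiv : ∀ x ∈ Ioo (0:ℝ) 1, HasDerivWithinAt
      (fun y : ℝ => Real.log y - Real.log (1 - y)) (x⁻¹ + (1-x)⁻¹) (Ioo (0:ℝ) 1) x :=
    fun x hx => (phi_deriv hx).hasDerivWithinAt
  rw [← integrableOn_univ, ← phi_image,
    integrableOn_image_iff_integrableOn_abs_deriv_smul measurableSet_Ioo hderiv phi_inj]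
  have hbeta : IntegrableOn (fun x : ℝ => (x:ℂ)^(p-1) * (1-(x:ℂ))^(q-1)) (Ioo (0:ℝ) 1) :=
    ((Complex.betaIntegral_convergent hp hq).1).mono_set Ioo_subset_Ioc_self
  exact hbeta.congr (fe_betaIntegrand p q).symm

theorem fe_integral {p q : ℂ} (hp : 0 < p.re) (hq : 0 < q.re) :
    ∫ t : ℝ, fe p q t = Complex.Gamma p * Complex.Gamma q / Complex.Gamma (p+q) := by
  have hderiv : ∀ x ∈ Ioo (0:ℝ) 1, HasDerivWithinAt
      (fun y : ℝ => Real.log y - Real.log (1 - y)) (x⁻¹ + (1-x)⁻¹) (Ioo (0:ℝ) 1) x :=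
    fun x hx => (phi_deriv hx).hasDerivWithinAt
  have h1 : ∫ t : ℝ, fe p q t = ∫ x in Ioo (0:ℝ) 1, (x:ℂ)^(p-1) * (1-(x:ℂ))^(q-1) := by
    rw [← setIntegral_univ, ← phi_image,
      integral_image_eq_integral_abs_deriv_smul measurableSet_Ioo hderiv phi_inj]
    exact integral_congr_ae (fe_betaIntegrand p q)
  have h2 : Complex.betaIntegral p q = ∫ x in Ioo (0:ℝ) 1, (x:ℂ)^(p-1) * (1-(x:ℂ))^(q-1) := by
    rw [Complex.betaIntegral, intervalIntegral.integral_of_le zero_le_one,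
      integral_Ioc_eq_integral_Ioo]
  have h3 := Complex.Gamma_mul_Gamma_eq_betaIntegral hp hq
  have hne : Complex.Gamma (p+q) ≠ 0 :=
    Complex.Gamma_ne_zero_of_re_pos (by rw [Complex.add_re]; exact add_pos hp hq)
  rw [h1, ← h2, eq_div_iff hne, mul_comm, ← h3]


noncomputable def Ghat (p q : ℂ) (x : ℝ) : ℂ :=
  Complex.Gamma (p + Complex.I * x) * Complex.Gamma (q - Complex.I * x)

lemma re_add_I_mul (p : ℂ) (x : ℝ) : (p + Complex.I * x).re = p.re := by
  simp

lemma re_sub_I_mul (p : ℂ) (x : ℝ) : (p - Complex.I * x).re = p.re := by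
  simp

lemma fe_mul_exp (p q : ℂ) (x t : ℝ) :
    Complex.exp (Complex.I * x * t) * fe p q t
      = fe (p + Complex.I * x) (q - Complex.I * x) t := by
  rw [fe, fe, ← Complex.exp_add]
  congr 1
  ring

lemma exp_fe_integrable {p q : ℂ} (hp : 0 < p.re) (hq : 0 < q.re) (x : ℝ) :
    Integrable (fun t : ℝ => Complex.exp (Complex.I * x * t) * fe p q t) := by
  have := fe_integrable (p := p + Complex.I * x) (q := q - Complex.I * x)
    (by rw [re_add_I_mul]; exact hp) (by rw [re_sub_I_mul]; exact hq)
  exact this.congr (Filter.Eventually.of_forall fun t => (fe_mul_exp p q x t).symm)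

lemma Ghat_eq {p q : ℂ} (hp : 0 < p.re) (hq : 0 < q.re) (x : ℝ) :
    Ghat p q x = Complex.Gamma (p+q) * ∫ t : ℝ, Complex.exp (Complex.I * x * t) * fe p q t := by
  have h1 : (∫ t : ℝ, Complex.exp (Complex.I * x * t) * fe p q t)
      = ∫ t : ℝ, fe (p + Complex.I * x) (q - Complex.I * x) t := by
    congr 1; ext t; exact fe_mul_exp p q x t
  rw [h1, fe_integral (by rw [re_add_I_mul]; exact hp) (by rw [re_sub_I_mul]; exact hq)]
  have harg : (p + Complex.I * x) + (q - Complex.I * x) = p + q := by ring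
  rw [harg, Ghat]
  have hne : Complex.Gamma (p+q) ≠ 0 :=
    Complex.Gamma_ne_zero_of_re_pos (by rw [Complex.add_re]; exact add_pos hp hq)
  field_simp

lemma Ghat_bound {p q : ℂ} (hp : 0 < p.re) (hq : 0 < q.re) (x : ℝ) :
    ‖Ghat p q x‖ ≤ ‖Complex.Gamma (p+q)‖ * ∫ t : ℝ, ‖fe p q t‖ := by
  rw [Ghat_eq hp hq x, norm_mul]
  gcongr
  calc ‖∫ t : ℝ, Complex.exp (Complex.I * x * t) * fe p q t‖
      ≤ ∫ t : ℝ, ‖Complex.exp (Complex.I * x * t) * fe p q t‖ :=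
        norm_integral_le_integral_norm _
    _ = ∫ t : ℝ, ‖fe p q t‖ := by
        congr 1; ext t
        rw [norm_mul]
        have : ‖Complex.exp (Complex.I * x * t)‖ = 1 := by
          rw [Complex.norm_exp]
          simp
        rw [this, one_mul]

lemma Ghat_rec {p q : ℂ} (hp : 0 < p.re) (hq : 0 < q.re) (x : ℝ) :
    Ghat (p+1) (q+1) x = (p + Complex.I * x) * (q - Complex.I * x) * Ghat p q x := by
  have h1 : p + 1 + Complex.I * x = (p + Complex.I * x) + 1 := by ring
  have h2 : q + 1 - Complex.I * x = (q - Complex.I * x) + 1 := by ring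
  have hp0 : p + Complex.I * x ≠ 0 := by
    intro h; have := congrArg Complex.re h; rw [re_add_I_mul] at this; simp at this; linarith
  have hq0 : q - Complex.I * x ≠ 0 := by
    intro h; have := congrArg Complex.re h; rw [re_sub_I_mul] at this; simp at this; linarith
  rw [Ghat, Ghat, h1, h2, Complex.Gamma_add_one _ hp0, Complex.Gamma_add_one _ hq0]
  ring


lemma integrable_of_decay (F : ℝ → ℂ) (hcont : Continuous F) {C R : ℝ} (hR : 0 < R)
    (h : ∀ x : ℝ, R ≤ |x| → ‖F x‖ ≤ C / x^2) : Integrable F := by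
  have hIoi : ∀ (G : ℝ → ℂ), Continuous G → (∀ x : ℝ, R ≤ |x| → ‖G x‖ ≤ C / x^2) →
      IntegrableOn G (Ioi R) := by
    intro G hG hGb
    apply Integrable.mono' ((integrableOn_Ioi_rpow_of_lt (by norm_num : (-2:ℝ) < -1) hR).const_mul C)
    · exact hG.aestronglyMeasurable.restrict
    · filter_upwards [ae_restrict_mem measurableSet_Ioi] with x hx
      have hx0 : 0 < x := lt_trans hR hx
      have hb := hGb x (by rw [abs_of_pos hx0]; exact le_of_lt hx)
      have hrw : x ^ (-2:ℝ) = (x^2)⁻¹ := by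
        rw [Real.rpow_neg hx0.le, ← Real.rpow_natCast x 2]; norm_num
      rw [hrw, ← div_eq_mul_inv]
      exact hb
  have h2 : IntegrableOn F (Ioi R) := hIoi F hcont h
  have h3 : IntegrableOn F (Iic (-R)) := by
    have hneg : IntegrableOn (fun x : ℝ => F (-x)) (Ici R) := by
      rw [integrableOn_Ici_iff_integrableOn_Ioi]
      refine hIoi _ (hcont.comp continuous_neg) (fun x hx => ?_)
      have := h (-x) (by rwa [abs_neg])
      simpa using this
    have hiff := MeasurePreserving.integrableOn_comp_preimage
      (Measure.measurePreserving_neg (volume : Measure ℝ))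
      (Homeomorph.neg ℝ).measurableEmbedding (f := F) (s := Iic (-R))
    refine hiff.1 ?_
    have hpre : ((Neg.neg : ℝ → ℝ) ⁻¹' (Iic (-R)) : Set ℝ) = Ici R := by ext y; simp
    show IntegrableOn (F ∘ (Neg.neg : ℝ → ℝ)) ((Neg.neg : ℝ → ℝ) ⁻¹' (Iic (-R))) volume
    rw [hpre]
    exact hneg
  rw [← integrableOn_univ]
  have hsub : (univ : Set ℝ) ⊆ Iic (-R) ∪ (Icc (-R) R ∪ Ioi R) := by
    intro x _
    rcases le_total x (-R) with h' | h'
    · exact Or.inl h'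
    · rcases le_total x R with h'' | h''
      · exact Or.inr (Or.inl ⟨h', h''⟩)
      · rcases lt_or_eq_of_le h'' with h3 | h3
        · exact Or.inr (Or.inr h3)
        · exact Or.inr (Or.inl ⟨h', le_of_eq h3.symm⟩)
  exact (h3.union ((hcont.integrableOn_Icc).union h2)).mono_set hsub

lemma Ghat_continuous {p q : ℂ} (hp : 0 < p.re) (hq : 0 < q.re) :
    Continuous (Ghat p q) := by
  rw [continuous_iff_continuousAt]
  intro x
  have hin1 : Continuous (fun y : ℝ => p + Complex.I * y) :=
    continuous_const.add (continuous_const.mul Complex.continuous_ofReal)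
  have hin2 : Continuous (fun y : ℝ => q - Complex.I * y) :=
    continuous_const.sub (continuous_const.mul Complex.continuous_ofReal)
  have hg1 : DifferentiableAt ℂ Complex.Gamma (p + Complex.I * x) := by
    apply Complex.differentiableAt_Gamma
    intro m h
    have := congrArg Complex.re h
    rw [re_add_I_mul] at this
    simp at this
    have : (0:ℝ) ≤ m := Nat.cast_nonneg m
    linarith
  have hg2 : DifferentiableAt ℂ Complex.Gamma (q - Complex.I * x) := by
    apply Complex.differentiableAt_Gamma
    intro m h
    have := congrArg Complex.re h
    rw [re_sub_I_mul] at this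
    simp at this
    have : (0:ℝ) ≤ m := Nat.cast_nonneg m
    linarith
  have c1 : ContinuousAt (Complex.Gamma ∘ fun y : ℝ => p + Complex.I * y) x :=
    ContinuousAt.comp hg1.continuousAt hin1.continuousAt
  have c2 : ContinuousAt (Complex.Gamma ∘ fun y : ℝ => q - Complex.I * y) x :=
    ContinuousAt.comp hg2.continuousAt hin2.continuousAt
  exact c1.mul c2

lemma Ghat_decay {p q : ℂ} (hp : 0 < p.re) (hq : 0 < q.re) :
    ∃ M : ℝ, 0 ≤ M ∧ ∀ x : ℝ, 2*(|p.im|+|q.im|)+2 ≤ |x| →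
      ‖Ghat p q x‖ ≤ M / x^2 := by
  set M₀ : ℝ := ‖Complex.Gamma ((p+1)+(q+1))‖ * ∫ t : ℝ, ‖fe (p+1) (q+1) t‖ with hM₀
  have hM₀0 : 0 ≤ M₀ := mul_nonneg (norm_nonneg _) (integral_nonneg fun t => norm_nonneg _)
  have hp1 : 0 < (p+1).re := by simp; linarith
  have hq1 : 0 < (q+1).re := by simp; linarith
  refine ⟨4*M₀, by linarith, fun x hx => ?_⟩
  have hxpos : (2:ℝ) ≤ |x| := by
    have : 0 ≤ |p.im|+|q.im| := by positivity
    linarith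
  have hx0 : x ≠ 0 := by intro h; rw [h] at hxpos; simp at hxpos; linarith
  have h1 : |x|/2 ≤ ‖p + Complex.I * x‖ := by
    have him : (p + Complex.I * x).im = p.im + x := by simp
    have h2 : |p.im + x| ≤ ‖p + Complex.I * x‖ := by
      rw [← him]; exact (Complex.abs_im_le_norm _)
    have h3 : |x| - |p.im| ≤ |p.im + x| := by
      have := abs_sub_abs_le_abs_sub x (-p.im)
      simpa [add_comm] using this
    have h4 : |p.im| ≤ |x|/2 - 1 := by linarith [abs_nonneg q.im]
    linarith
  have h1' : |x|/2 ≤ ‖q - Complex.I * x‖ := by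
    have him : (q - Complex.I * x).im = q.im - x := by simp
    have h2 : |q.im - x| ≤ ‖q - Complex.I * x‖ := by
      rw [← him]; exact (Complex.abs_im_le_norm _)
    have h3 : |x| - |q.im| ≤ |q.im - x| := by
      rw [abs_sub_comm]
      exact abs_sub_abs_le_abs_sub x q.im
    have h4 : |q.im| ≤ |x|/2 - 1 := by linarith [abs_nonneg p.im]
    linarith
  have hrec : ‖Ghat (p+1) (q+1) x‖
      = ‖p + Complex.I * x‖ * ‖q - Complex.I * x‖ * ‖Ghat p q x‖ := by
    rw [Ghat_rec hp hq x, norm_mul, norm_mul]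
  have hb : ‖Ghat (p+1) (q+1) x‖ ≤ M₀ := Ghat_bound hp1 hq1 x
  have hchain : (|x|/2) * (|x|/2) * ‖Ghat p q x‖ ≤ M₀ := by
    calc (|x|/2) * (|x|/2) * ‖Ghat p q x‖
        ≤ ‖p + Complex.I * x‖ * ‖q - Complex.I * x‖ * ‖Ghat p q x‖ := by
          apply mul_le_mul _ (le_refl _) (norm_nonneg _) (by positivity)
          exact mul_le_mul h1 h1' (by positivity) (norm_nonneg _)
      _ = ‖Ghat (p+1) (q+1) x‖ := hrec.symm
      _ ≤ M₀ := hb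
  have hxx : (|x|/2)*(|x|/2) = x^2/4 := by
    rw [div_mul_div_comm, ← sq, _root_.sq_abs]; norm_num
  rw [hxx] at hchain
  have hx2 : (0:ℝ) < x^2 := by positivity
  rw [le_div_iff₀ hx2]
  nlinarith [hchain]


lemma Ghat_mul_decay {a c b d : ℂ} (ha : 0 < a.re) (hc : 0 < c.re) (hb : 0 < b.re)
    (hd : 0 < d.re) : ∃ C R : ℝ, 0 < R ∧ 0 ≤ C ∧ ∀ x : ℝ, R ≤ |x| →
      ‖Ghat a c x * Ghat b d x‖ ≤ C / x^2 ∧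
      ‖(x:ℂ) * (Ghat a c x * Ghat b d x)‖ ≤ C / x^2 := by
  obtain ⟨M₁, hM₁0, hM₁⟩ := Ghat_decay ha hc
  obtain ⟨M₂, hM₂0, hM₂⟩ := Ghat_decay hb hd
  refine ⟨M₁ * M₂, (2*(|a.im|+|c.im|)+2) + (2*(|b.im|+|d.im|)+2), by positivity,
    mul_nonneg hM₁0 hM₂0, fun x hx => ?_⟩
  have hb1 : 2*(|a.im|+|c.im|)+2 ≤ |x| := by
    have : (0:ℝ) ≤ 2*(|b.im|+|d.im|)+2 := by positivity
    linarith
  have hb2 : 2*(|b.im|+|d.im|)+2 ≤ |x| := by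
    have : (0:ℝ) ≤ 2*(|a.im|+|c.im|)+2 := by positivity
    linarith
  have hx2 : (2:ℝ) ≤ |x| := by
    have h1 : (0:ℝ) ≤ |a.im|+|c.im| := by positivity
    have h2 : (0:ℝ) ≤ |b.im|+|d.im| := by positivity
    linarith
  have hxsq : (0:ℝ) < x^2 := by
    have : x ≠ 0 := by intro h; rw [h] at hx2; norm_num at hx2
    positivity
  have habs : |x| ≤ x^2 := by
    have h1 : (1:ℝ) ≤ |x| := by linarith
    calc |x| = |x| * 1 := (mul_one _).symm
      _ ≤ |x| * |x| := by gcongr <;> linarith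
      _ = x^2 := by rw [← _root_.sq_abs]; ring
  have hone : (1:ℝ) ≤ x^2 := le_trans (by linarith) habs
  have hprod : ‖Ghat a c x * Ghat b d x‖ ≤ (M₁/x^2) * (M₂/x^2) := by
    rw [norm_mul]
    exact mul_le_mul (hM₁ x hb1) (hM₂ x hb2) (norm_nonneg _) (by positivity)
  have hN0 : 0 ≤ M₁ * M₂ := mul_nonneg hM₁0 hM₂0
  constructor
  · refine le_trans hprod ?_
    rw [div_mul_div_comm, div_le_div_iff₀ (by positivity) hxsq]
    nlinarith [mul_le_mul_of_nonneg_left hone (mul_nonneg hN0 hxsq.le)]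
  · rw [norm_mul, Complex.norm_real, Real.norm_eq_abs]
    refine le_trans (mul_le_mul_of_nonneg_left hprod (abs_nonneg x)) ?_
    rw [div_mul_div_comm, ← mul_div_assoc, div_le_div_iff₀ (by positivity) hxsq]
    nlinarith [mul_le_mul_of_nonneg_left habs (mul_nonneg hN0 hxsq.le)]

lemma Ghat_mul_integrable {a c b d : ℂ} (ha : 0 < a.re) (hc : 0 < c.re) (hb : 0 < b.re)
    (hd : 0 < d.re) : Integrable (fun x : ℝ => Ghat a c x * Ghat b d x) := by
  obtain ⟨C, R, hR, hC, h⟩ := Ghat_mul_decay ha hc hb hd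
  exact integrable_of_decay _ ((Ghat_continuous ha hc).mul (Ghat_continuous hb hd)) hR
    (fun x hx => (h x hx).1)

lemma x_Ghat_mul_integrable {a c b d : ℂ} (ha : 0 < a.re) (hc : 0 < c.re) (hb : 0 < b.re)
    (hd : 0 < d.re) : Integrable (fun x : ℝ => (x:ℂ) * (Ghat a c x * Ghat b d x)) := by
  obtain ⟨C, R, hR, hC, h⟩ := Ghat_mul_decay ha hc hb hd
  exact integrable_of_decay _ (Complex.continuous_ofReal.mul
    ((Ghat_continuous ha hc).mul (Ghat_continuous hb hd))) hR (fun x hx => (h x hx).2)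


open scoped FourierTransform

lemma fe_continuous (p q : ℂ) : Continuous (fe p q) := by
  apply Complex.continuous_exp.comp
  apply Continuous.sub
  · exact continuous_const.mul Complex.continuous_ofReal
  · apply continuous_const.mul
    apply Complex.continuous_ofReal.comp
    apply Continuous.log
    · exact continuous_const.add Real.continuous_exp
    · intro x
      positivity
  
lemma Ghat_integrable {p q : ℂ} (hp : 0 < p.re) (hq : 0 < q.re) :
    Integrable (Ghat p q) := by
  obtain ⟨M, hM0, hM⟩ := Ghat_decay hp hq
  exact integrable_of_decay _ (Ghat_continuous hp hq)
    (by positivity : (0:ℝ) < 2*(|p.im|+|q.im|)+2) hM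

lemma Ghat_inv {p q : ℂ} (hp : 0 < p.re) (hq : 0 < q.re) (t : ℝ) :
    ∫ x : ℝ, Complex.exp (Complex.I * x * t) * Ghat p q x
      = 2 * Real.pi * Complex.Gamma (p+q) * fe p q (-t) := by
  have hΓ : Complex.Gamma (p+q) ≠ 0 :=
    Complex.Gamma_ne_zero_of_re_pos (by rw [Complex.add_re]; exact add_pos hp hq)
  have hFT : ∀ ξ : ℝ, 𝓕 (fe p q) ξ = Ghat p q (-(2*π)*ξ) / Complex.Gamma (p+q) := by
    intro ξ
    rw [fourier_real_eq_integral_exp_smul, Ghat_eq hp hq (-(2*π)*ξ),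
      mul_div_cancel_left₀ _ hΓ]
    congr 1
    funext v
    rw [smul_eq_mul]
    congr 1
    push_cast
    ring
  have hGhat : ∀ ξ : ℝ, Ghat p q (-(2*π)*ξ) = Complex.Gamma (p+q) * 𝓕 (fe p q) ξ := by
    intro ξ
    rw [hFT ξ]
    field_simp
  have hℱint : Integrable (𝓕 (fe p q)) := by
    have h1 : Integrable (fun ξ : ℝ => Ghat p q (-(2*π)*ξ)) :=
      (MeasureTheory.integrable_comp_mul_left_iff (Ghat p q)
        (neg_ne_zero.2 (ne_of_gt Real.two_pi_pos))).2 (Ghat_integrable hp hq)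
    exact (h1.div_const (Complex.Gamma (p+q))).congr
      (Filter.Eventually.of_forall fun ξ => (hFT ξ).symm)
  have hinv : 𝓕⁻ (𝓕 (fe p q)) = fe p q :=
    (fe_continuous p q).fourierInv_fourier_eq (fe_integrable hp hq) hℱint
  set F : ℝ → ℂ := fun x => Complex.exp (Complex.I * x * t) * Ghat p q x with hF
  have hcomp := MeasureTheory.Measure.integral_comp_mul_left F (-(2*π))
  have habs : |(-(2*π))⁻¹| = (2*π)⁻¹ := by
    rw [abs_inv, abs_neg, abs_of_pos Real.two_pi_pos]
  have h2 : ∫ y : ℝ, F y = (2*π) • ∫ x : ℝ, F (-(2*π)*x) := by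
    rw [hcomp, habs, smul_smul, mul_inv_cancel₀ (ne_of_gt Real.two_pi_pos), one_smul]
  have h3 : ∀ x : ℝ, F (-(2*π)*x)
      = Complex.Gamma (p+q) * (Complex.exp (((-2*π*x*t : ℝ) : ℂ) * Complex.I) • 𝓕 (fe p q) x) := by
    intro x
    calc F (-(2*π)*x)
        = Complex.exp (((-2*π*x*t : ℝ) : ℂ) * Complex.I) * (Complex.Gamma (p+q) * 𝓕 (fe p q) x) := by
          rw [hF]
          simp only []
          rw [hGhat x]
          congr 1
          push_cast
          ring
      _ = Complex.Gamma (p+q) * (Complex.exp (((-2*π*x*t : ℝ) : ℂ) * Complex.I) • 𝓕 (fe p q) x) := by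
          rw [smul_eq_mul]; ring
  have h4 : ∫ x : ℝ, F (-(2*π)*x) = Complex.Gamma (p+q) * 𝓕 (𝓕 (fe p q)) t := by
    rw [fourier_real_eq_integral_exp_smul]
    rw [← integral_const_mul]
    congr 1
    funext x
    exact h3 x
  have h5 : 𝓕 (𝓕 (fe p q)) t = fe p q (-t) := by
    have := fourierInv_eq_fourier_neg (𝓕 (fe p q)) (-t)
    rw [neg_neg] at this
    rw [← this, hinv]
  rw [h2, h4, h5, Complex.real_smul]
  push_cast
  ring


lemma log_one_add_exp_neg (t : ℝ) :
    Real.log (1 + Real.exp (-t)) = Real.log (1 + Real.exp t) - t := by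
  have h1 : 1 + Real.exp (-t) = (1 + Real.exp t) * Real.exp (-t) := by
    rw [Real.exp_neg]
    field_simp
    ring
  rw [h1, Real.log_mul (by positivity) (Real.exp_ne_zero _), Real.log_exp]
  ring

lemma fe_mul_neg (a c b d : ℂ) (t : ℝ) :
    fe a c t * fe b d (-t) = fe (a+d) (b+c) t := by
  rw [fe, fe, fe, ← Complex.exp_add, log_one_add_exp_neg]
  congr 1
  push_cast
  ring

theorem barnes {a b c d : ℂ} (ha : 0 < a.re) (hb : 0 < b.re) (hc : 0 < c.re)
    (hd : 0 < d.re) :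
    ∫ x : ℝ, Ghat a c x * Ghat b d x
      = 2 * Real.pi * Complex.Gamma (a+c) * Complex.Gamma (b+d) * Complex.Gamma (a+d) *
        Complex.Gamma (b+c) / Complex.Gamma (a+b+c+d) := by
  have step1 : ∫ x : ℝ, Ghat a c x * Ghat b d x
      = Complex.Gamma (a+c) * ∫ x : ℝ, ∫ t : ℝ,
          Complex.exp (Complex.I*x*t) * fe a c t * Ghat b d x := by
    rw [← integral_const_mul]
    congr 1
    funext x
    rw [Ghat_eq ha hc x, mul_assoc, ← MeasureTheory.integral_mul_const]
  have hswap : ∫ x : ℝ, ∫ t : ℝ, Complex.exp (Complex.I*x*t) * fe a c t * Ghat b d x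
      = ∫ t : ℝ, ∫ x : ℝ, Complex.exp (Complex.I*x*t) * fe a c t * Ghat b d x := by
    apply MeasureTheory.integral_integral_swap
    have hmaj : Integrable (fun z : ℝ×ℝ => ‖Ghat b d z.1‖ * ‖fe a c z.2‖)
        ((volume : Measure ℝ).prod volume) :=
      (Ghat_integrable hb hd).norm.mul_prod (fe_integrable ha hc).norm
    have hHcont : Continuous (fun z : ℝ×ℝ =>
        Complex.exp (Complex.I * z.1 * z.2) * fe a c z.2 * Ghat b d z.1) :=
      ((Complex.continuous_exp.comp
        ((continuous_const.mul (Complex.continuous_ofReal.comp continuous_fst)).mul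
          (Complex.continuous_ofReal.comp continuous_snd))).mul
        ((fe_continuous a c).comp continuous_snd)).mul
        ((Ghat_continuous hb hd).comp continuous_fst)
    apply MeasureTheory.Integrable.mono' hmaj hHcont.aestronglyMeasurable
    filter_upwards with z
    show ‖Complex.exp (Complex.I * z.1 * z.2) * fe a c z.2 * Ghat b d z.1‖
      ≤ ‖Ghat b d z.1‖ * ‖fe a c z.2‖
    rw [norm_mul, norm_mul]
    have h1 : ‖Complex.exp (Complex.I * z.1 * z.2)‖ = 1 := by
      rw [Complex.norm_exp]
      simp
    rw [h1, one_mul]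
    rw [mul_comm]
  have hinner : ∀ t : ℝ, ∫ x : ℝ, Complex.exp (Complex.I*x*t) * fe a c t * Ghat b d x
      = fe a c t * (2 * Real.pi * Complex.Gamma (b+d) * fe b d (-t)) := by
    intro t
    rw [← Ghat_inv hb hd t, ← integral_const_mul]
    congr 1
    funext x
    ring
  rw [step1, hswap]
  have hfinal : ∫ t : ℝ, ∫ x : ℝ, Complex.exp (Complex.I*x*t) * fe a c t * Ghat b d x
      = (2 * Real.pi * Complex.Gamma (b+d)) * ∫ t : ℝ, fe (a+d) (b+c) t := by
    rw [← integral_const_mul]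
    congr 1
    funext t
    rw [hinner t]
    rw [← fe_mul_neg a c b d t]
    ring
  rw [hfinal]
  have hval : ∫ t : ℝ, fe (a+d) (b+c) t
      = Complex.Gamma (a+d) * Complex.Gamma (b+c) / Complex.Gamma (a+b+c+d) := by
    rw [fe_integral (by rw [Complex.add_re]; exact add_pos ha hd)
      (by rw [Complex.add_re]; exact add_pos hb hc)]
    congr 2
    ring
  rw [hval]
  ring


theorem mean_core {a b c d : ℂ} (ha : 0 < a.re) (hb : 0 < b.re) (hc : 0 < c.re)
    (hd : 0 < d.re) :
    ∫ x : ℝ, (x : ℂ) * hahn x a b c d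
      = Complex.I * (a*b - c*d) / (a+b+c+d) := by
  have ha1 : 0 < (a+1).re := by simp; linarith
  have hac : 0 < (a+c).re := by rw [Complex.add_re]; exact add_pos ha hc
  have had : 0 < (a+d).re := by rw [Complex.add_re]; exact add_pos ha hd
  have hbc : 0 < (b+c).re := by rw [Complex.add_re]; exact add_pos hb hc
  have hbd : 0 < (b+d).re := by rw [Complex.add_re]; exact add_pos hb hd
  have hS : 0 < (a+b+c+d).re := by
    simp only [Complex.add_re]; linarith
  have hΓac := Complex.Gamma_ne_zero_of_re_pos hac
  have hΓad := Complex.Gamma_ne_zero_of_re_pos had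
  have hΓbc := Complex.Gamma_ne_zero_of_re_pos hbc
  have hΓbd := Complex.Gamma_ne_zero_of_re_pos hbd
  have hΓS := Complex.Gamma_ne_zero_of_re_pos hS
  have hS0 : a+b+c+d ≠ 0 := fun h => by rw [h] at hS; simp at hS
  have hac0 : a+c ≠ 0 := fun h => by rw [h] at hac; simp at hac
  have had0 : a+d ≠ 0 := fun h => by rw [h] at had; simp at had
  have hπ : (Real.pi : ℂ) ≠ 0 := by
    exact_mod_cast Real.pi_ne_zero
  -- rewrite the integrand
  have hrw : ∀ x : ℝ, (x : ℂ) * hahn x a b c d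
      = (Complex.Gamma (a+b+c+d) / (2*(Real.pi:ℂ)*Complex.Gamma (a+c)*Complex.Gamma (b+c)
          *Complex.Gamma (a+d)*Complex.Gamma (b+d)))
        * ((x:ℂ) * (Ghat a c x * Ghat b d x)) := by
    intro x
    rw [hahn, Ghat, Ghat]
    push_cast
    ring
  have hshift : ∀ x : ℝ, Ghat (a+1) c x = (a + Complex.I*x) * Ghat a c x := by
    intro x
    have hne : a + Complex.I*x ≠ 0 := by
      intro h
      have := congrArg Complex.re h
      rw [re_add_I_mul] at this
      simp at this
      linarith
    rw [Ghat, Ghat, show a+1+Complex.I*(x:ℂ) = (a+Complex.I*x)+1 from by ring,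
      Complex.Gamma_add_one _ hne]
    ring
  have hsplit : ∀ x : ℝ, (x:ℂ) * (Ghat a c x * Ghat b d x)
      = (-Complex.I) * (Ghat (a+1) c x * Ghat b d x)
        + (Complex.I * a) * (Ghat a c x * Ghat b d x) := by
    intro x
    rw [hshift x]
    linear_combination (Ghat a c x * Ghat b d x) * (x:ℂ) * Complex.I_mul_I
  have hint1 : Integrable (fun x : ℝ => (-Complex.I) * (Ghat (a+1) c x * Ghat b d x)) :=
    (Ghat_mul_integrable ha1 hc hb hd).const_mul _
  have hint2 : Integrable (fun x : ℝ => (Complex.I * a) * (Ghat a c x * Ghat b d x)) :=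
    (Ghat_mul_integrable ha hc hb hd).const_mul _
  have hval : ∫ x : ℝ, (x:ℂ) * (Ghat a c x * Ghat b d x)
      = (-Complex.I) * (∫ x : ℝ, Ghat (a+1) c x * Ghat b d x)
        + (Complex.I * a) * (∫ x : ℝ, Ghat a c x * Ghat b d x) := by
    rw [← integral_const_mul, ← integral_const_mul, ← integral_add hint1 hint2]
    congr 1
    funext x
    exact hsplit x
  have hJ1 : ∫ x : ℝ, Ghat (a+1) c x * Ghat b d x
      = 2*(Real.pi:ℂ)*((a+c) * Complex.Gamma (a+c))*Complex.Gamma (b+d)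
        *((a+d)*Complex.Gamma (a+d))*Complex.Gamma (b+c)
        /((a+b+c+d)*Complex.Gamma (a+b+c+d)) := by
    rw [barnes ha1 hb hc hd, show a+1+c = (a+c)+1 from by ring,
      show a+1+d = (a+d)+1 from by ring, show a+1+b+c+d = (a+b+c+d)+1 from by ring,
      Complex.Gamma_add_one _ hac0, Complex.Gamma_add_one _ had0,
      Complex.Gamma_add_one _ hS0]
  have hJ : ∫ x : ℝ, Ghat a c x * Ghat b d x
      = 2*(Real.pi:ℂ)*Complex.Gamma (a+c)*Complex.Gamma (b+d)*Complex.Gamma (a+d)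
        *Complex.Gamma (b+c)/Complex.Gamma (a+b+c+d) := by
    rw [barnes ha hb hc hd]
  calc ∫ x : ℝ, (x : ℂ) * hahn x a b c d
      = (Complex.Gamma (a+b+c+d) / (2*(Real.pi:ℂ)*Complex.Gamma (a+c)*Complex.Gamma (b+c)
          *Complex.Gamma (a+d)*Complex.Gamma (b+d)))
        * ∫ x : ℝ, (x:ℂ) * (Ghat a c x * Ghat b d x) := by
        rw [← integral_const_mul]
        congr 1
        funext x
        exact hrw x
    _ = Complex.I * (a*b - c*d) / (a+b+c+d) := by
        rw [hval, hJ1, hJ]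
        have key : ∀ (A B C D G S : ℂ), A ≠ 0 → B ≠ 0 → C ≠ 0 → D ≠ 0 → G ≠ 0 → S ≠ 0 →
            (2*(Real.pi:ℂ)) ≠ 0 →
            G / (2*(Real.pi:ℂ)*A*B*C*D) *
              (-Complex.I * (2*(Real.pi:ℂ)*((a+c)*A)*D*((a+d)*C)*B / (S*G))
                + Complex.I * a * (2*(Real.pi:ℂ)*A*D*C*B/G))
              = Complex.I * (a * S - (a+c)*(a+d)) / S := by
          intro A B C D G S hA hB hC hD hG hS htp
          set T : ℂ := 2*(Real.pi:ℂ)*A*D*C*B/G with hT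
          have claim1 : 2*(Real.pi:ℂ)*((a+c)*A)*D*((a+d)*C)*B / (S*G) = ((a+c)*(a+d)) / S * T := by
            rw [hT, div_mul_div_comm]
            congr 1
            ring
          have claim2 : G / (2*(Real.pi:ℂ)*A*B*C*D) * T = 1 := by
            rw [hT, div_mul_div_comm, div_eq_one_iff_eq
              (mul_ne_zero (mul_ne_zero (mul_ne_zero (mul_ne_zero (mul_ne_zero htp hA) hB) hC) hD) hG)]
            ring
          rw [claim1]
          calc G / (2*(Real.pi:ℂ)*A*B*C*D) *
              (-Complex.I * (((a+c)*(a+d)) / S * T) + Complex.I * a * T)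
              = (G / (2*(Real.pi:ℂ)*A*B*C*D) * T) * (-Complex.I*((a+c)*(a+d))/S + Complex.I*a) := by
                ring
            _ = -Complex.I*((a+c)*(a+d))/S + Complex.I*a := by rw [claim2, one_mul]
            _ = Complex.I * (a * S - (a+c)*(a+d)) / S := by
                field_simp
                ring
        have h2 : (2*(Real.pi:ℂ)) ≠ 0 := by
          simp [Real.pi_ne_zero]
        have := key (Complex.Gamma (a+c)) (Complex.Gamma (b+c)) (Complex.Gamma (a+d))
          (Complex.Gamma (b+d)) (Complex.Gamma (a+b+c+d)) (a+b+c+d)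
          hΓac hΓbc hΓad hΓbd hΓS hS0 h2
        rw [this]
        congr 1
        ring

end HahnAux

/-- the mean of the continuous Hahn distribution:
`E(X) = −(Re(a)·Im(b) + Re(b)·Im(a))/Re(a+b)`. -/
theorem hahn_mean (a b : ℂ) (ha : 0 < a.re) (hb : 0 < b.re) :
    ∫ x : ℝ, (x : ℂ) * hahn x a b ((starRingEnd ℂ) a) ((starRingEnd ℂ) b)
      = ((-(a.re * b.im + b.re * a.im) / (a + b).re : ℝ) : ℂ) := by
  have hc : 0 < ((starRingEnd ℂ) a).re := by rwa [Complex.conj_re]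
  have hd : 0 < ((starRingEnd ℂ) b).re := by rwa [Complex.conj_re]
  rw [HahnAux.mean_core ha hb hc hd]
  have hSre : 0 < (a + b + (starRingEnd ℂ) a + (starRingEnd ℂ) b).re := by
    simp only [Complex.add_re, Complex.conj_re]
    linarith
  have hS0 : a + b + (starRingEnd ℂ) a + (starRingEnd ℂ) b ≠ 0 :=
    fun h => by rw [h] at hSre; simp at hSre
  have habre : ((a+b).re : ℂ) ≠ 0 := by
    have : 0 < (a+b).re := by rw [Complex.add_re]; linarith
    exact_mod_cast ne_of_gt this
  rw [show ((-(a.re * b.im + b.re * a.im) / (a + b).re : ℝ) : ℂ)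
      = ((-(a.re * b.im + b.re * a.im) : ℝ) : ℂ) / (((a+b).re : ℝ) : ℂ) from by push_cast; ring,
    div_eq_div_iff hS0 habre]
  apply Complex.ext <;>
    simp only [Complex.mul_re, Complex.mul_im, Complex.add_re, Complex.add_im,
      Complex.sub_re, Complex.sub_im, Complex.I_re, Complex.I_im, Complex.ofReal_re,
      Complex.ofReal_im, Complex.conj_re, Complex.conj_im, Complex.neg_re, Complex.neg_im] <;>
    ring
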